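/- arXiv:1910.07444 — 2 statements merged into one kernel-verified Lean document; each statement's English description precedes it below -/
import Mathlib

section
/- Let $R = \mathbb{Z}[x_1,\dots,x_r]$, and for an indexing sequence $I = (i_1,\dots,i_k)$ with each $i_j < r$, define $A_I = R[\delta_1,\dots,\delta_k]/(\delta_j^2 + [\alpha_{i_j}]_j \delta_j : 1 \le j \le k)$, where for any weight $\alpha$ the elements $[\alpha]_j \in A_I$ are defined recursively by $[\alpha]_1 = \alpha$ and $[\alpha]_j = [\alpha]_{j-1} + \alpha(h_{i_{j-1}})\,\delta_{j-1}$. Then $A_I$ is a free $R$-module with basis the $2^k$ square-free monomials in $\delta_1,\dots,\delta_k$. -/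
noncomputable section

/-- `R = ℤ[x_1,…,x_r]` (variables indexed `0,…,r-1`). -/
abbrev RR (r : ℕ) : Type := MvPolynomial (Fin r) ℤ

/-- A weight, given by its coordinates in the basis `x_1,…,x_r`. -/
abbrev Weight (r : ℕ) : Type := Fin r → ℤ

/-- The element of `R` corresponding to a weight. -/
def Weight.toR {r : ℕ} (w : Weight r) : RR r :=
  ∑ m : Fin r, MvPolynomial.C (w m) * MvPolynomial.X m

/-- The coroot pairing `α(h_u)`, with `x_m(h_u) = δ_{m,u} - δ_{m,u+1}`. -/
def Weight.pair {r : ℕ} (w : Weight r) (u : ℕ) (hu : u + 1 < r) : ℤ :=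
  w ⟨u, Nat.lt_of_succ_lt hu⟩ - w ⟨u + 1, hu⟩

/-- The simple root `α_s = x_s - x_{s+1}` as a weight. -/
def simpleRootW (r s : ℕ) : Weight r :=
  fun m => (if (m : ℕ) = s then 1 else 0) - (if (m : ℕ) = s + 1 then 1 else 0)

/-- The polynomial ring `R[δ_1,…,δ_k]`. -/
abbrev BB (r k : ℕ) : Type := MvPolynomial (Fin k) (RR r)

/-- The class `[α]_j` (`0`-indexed: `brk i hi w j` is the paper's `[α]_{j+1}`), i.e.
the solution `[α]_j = α + ∑_{t<j} α(h_{i_t}) δ_t` of the recursion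
`[α]_1 = α`, `[α]_j = [α]_{j-1} + α(h_{i_{j-1}}) δ_{j-1}`. -/
def brk {r k : ℕ} (i : Fin k → ℕ) (hi : ∀ j, i j + 1 < r) (w : Weight r) (j : ℕ) :
    BB r k :=
  MvPolynomial.C w.toR +
    ∑ t ∈ Finset.univ.filter (fun t : Fin k => (t : ℕ) < j),
      (w.pair (i t) (hi t)) • MvPolynomial.X t

/-- The defining relation `δ_j² + [α_{i_j}]_j δ_j` at position `j`. -/
def relBS {r k : ℕ} (i : Fin k → ℕ) (hi : ∀ j, i j + 1 < r) (j : Fin k) : BB r k :=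
  MvPolynomial.X j ^ 2 + brk i hi (simpleRootW r (i j)) (j : ℕ) * MvPolynomial.X j

/-- The Bott–Samelson algebra `A_I = R[δ_1,…,δ_k]/(δ_j² + [α_{i_j}]_j δ_j)`. -/
abbrev AI {r k : ℕ} (i : Fin k → ℕ) (hi : ∀ j, i j + 1 < r) : Type :=
  BB r k ⧸ Ideal.span (Set.range (relBS i hi))

/-!
Spanning: for `j ∈ S` the relation `δ_j² = -[α_{i_j}]_j δ_j` turns `δ_j δ_S` into
`-[α_{i_j}]_j δ_S`, and `[α_{i_j}]_j` involves only `R` and the `δ_t` with `t < j`; so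
`δ_j δ_S` lies in the span of the square-free monomials, by induction on `j`.

Independence comes from localization at the `2^k` torus-fixed points. For `ε ⊆ {1,…,k}` let
`g_j` be the product of the simple reflections `s_{i_t}` with `t < j`, `t ∈ ε`. Sending `δ_j` to
`-g_j(α_{i_j})` for `j ∈ ε` and to `0` otherwise sends `[α]_j` to `g_j(α)` (by the reflection
formula `s_u(α) = α - α(h_u) α_u`), hence kills every relation. Under this evaluation `δ_S`
vanishes unless `S ⊆ ε`, and `δ_ε` is a product of nonzero elements of the domain `R`, so the
evaluation matrix is triangular with nonzero diagonal.
-/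

namespace Weight

open MvPolynomial

variable {r : ℕ}

lemma toR_sub (v w : Weight r) : (v - w).toR = v.toR - w.toR := by
  simp only [toR, Pi.sub_apply, map_sub, sub_mul, Finset.sum_sub_distrib]

lemma toR_zsmul (c : ℤ) (w : Weight r) : (c • w).toR = c • w.toR := by
  simp only [toR, Pi.smul_apply, smul_eq_mul, map_mul, Finset.smul_sum, zsmul_eq_mul,
    eq_intCast, mul_assoc]

lemma eval_toR (w : Weight r) (a : Fin r) :
    eval (Pi.single a 1) w.toR = w a := by
  simp [toR, Pi.single_apply, mul_ite]

lemma toR_ne_zero {w : Weight r} {a : Fin r} (h : w a ≠ 0) : w.toR ≠ 0 := fun h0 =>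
  h (by rw [← eval_toR w a, h0, map_zero])

end Weight

def simpleRefl {r u : ℕ} (hu : u + 1 < r) : Equiv.Perm (Fin r) :=
  Equiv.swap ⟨u, Nat.lt_of_succ_lt hu⟩ ⟨u + 1, hu⟩

lemma Weight.comp_simpleRefl {r u : ℕ} (w : Weight r) (hu : u + 1 < r) :
    w ∘ simpleRefl hu = w - w.pair u hu • simpleRootW r u := by
  funext n
  simp only [Function.comp_apply, simpleRefl, Pi.sub_apply, Pi.smul_apply, smul_eq_mul,
    simpleRootW, Weight.pair]
  rcases eq_or_ne n ⟨u, Nat.lt_of_succ_lt hu⟩ with rfl | h1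
  · simp
  rcases eq_or_ne n ⟨u + 1, hu⟩ with rfl | h2
  · simp
  rw [Equiv.swap_apply_of_ne_of_ne h1 h2]
  have h1' : (n : ℕ) ≠ u := fun h => h1 (Fin.ext h)
  have h2' : (n : ℕ) ≠ u + 1 := fun h => h2 (Fin.ext h)
  simp [h1', h2']

theorem linearIndependent_of_triangular {ι R M : Type*} [Fintype ι] [PartialOrder ι] [Ring R]
    [NoZeroDivisors R] [AddCommGroup M] [Module R M] (b : ι → M) (φ : ι → M →ₗ[R] R)
    (h_triangular : ∀ s t, φ s (b t) ≠ 0 → t ≤ s) (h_diag : ∀ s, φ s (b s) ≠ 0) :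
    LinearIndependent R b := by
  rw [Fintype.linearIndependent_iff]
  intro g hg s
  induction s using WellFoundedLT.induction with
  | ind s ih =>
    have hsum : ∑ t, g t * φ s (b t) = 0 := by
      simpa only [map_sum, map_smul, smul_eq_mul, map_zero] using congrArg (φ s) hg
    rw [Finset.sum_eq_single s (fun t _ hts => ?_) (by simp)] at hsum
    · exact (mul_eq_zero.mp hsum).resolve_right (h_diag s)
    · by_cases h : φ s (b t) = 0
      · rw [h, mul_zero]
      · rw [ih t ((h_triangular s t h).lt_of_ne hts), zero_mul]

namespace BottSamelson

open MvPolynomial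

variable {r k : ℕ} (i : Fin k → ℕ) (hi : ∀ j, i j + 1 < r)

lemma brk_zero (w : Weight r) : brk i hi w 0 = C w.toR := by
  simp [brk]

lemma brk_succ (w : Weight r) (t : Fin k) :
    brk i hi w (t + 1) = brk i hi w t + w.pair (i t) (hi t) • X t := by
  have hfilter : Finset.univ.filter (fun s : Fin k => (s : ℕ) < t + 1)
      = insert t (Finset.univ.filter (fun s : Fin k => (s : ℕ) < t)) := by
    ext s
    simp only [Finset.mem_filter, Finset.mem_insert, Finset.mem_univ, true_and, Fin.ext_iff]
    omega
  rw [brk, brk, hfilter, Finset.sum_insert (by simp)]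
  abel

variable (ε : Finset (Fin k))

/-- The Weyl group element `g_j = ∏ s_{i_t}`, the product over `t < j` with `t ∈ ε`, attached to
the torus-fixed point `ε` of the Bott–Samelson variety. -/
def fixedPerm : ℕ → Equiv.Perm (Fin r)
  | 0 => 1
  | j + 1 =>
    if h : ∃ hj : j < k, ⟨j, hj⟩ ∈ ε then
      (fixedPerm j).trans (simpleRefl (hi ⟨j, h.1⟩))
    else fixedPerm j

lemma fixedPerm_succ (t : Fin k) :
    fixedPerm i hi ε (t + 1)
      = if t ∈ ε then (fixedPerm i hi ε t).trans (simpleRefl (hi t)) else fixedPerm i hi ε t := by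
  by_cases ht : t ∈ ε
  · rw [fixedPerm, dif_pos ⟨t.isLt, ht⟩, if_pos ht]
  · rw [fixedPerm, dif_neg (fun ⟨_, h⟩ => ht h), if_neg ht]

def deltaAt (j : Fin k) : RR r :=
  if j ∈ ε then -Weight.toR (simpleRootW r (i j) ∘ fixedPerm i hi ε j) else 0

lemma aeval_deltaAt_brk (w : Weight r) {j : ℕ} (hj : j ≤ k) :
    aeval (deltaAt i hi ε) (brk i hi w j) = Weight.toR (w ∘ fixedPerm i hi ε j) := by
  induction j with
  | zero => simp [brk_zero, fixedPerm]
  | succ j ih =>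
    set t : Fin k := ⟨j, hj⟩
    rw [show j + 1 = (t : ℕ) + 1 from rfl, brk_succ, fixedPerm_succ, map_add, map_zsmul,
      aeval_X, ih (Nat.le_of_succ_le hj), deltaAt]
    by_cases ht : t ∈ ε
    · rw [if_pos ht, if_pos ht, Equiv.coe_trans, ← Function.comp_assoc, Weight.comp_simpleRefl,
        Pi.sub_comp, Pi.smul_comp, Weight.toR_sub, Weight.toR_zsmul, smul_neg,
        sub_eq_add_neg]
    · rw [if_neg ht, if_neg ht, smul_zero, add_zero]

lemma aeval_deltaAt_relBS (j : Fin k) : aeval (deltaAt i hi ε) (relBS i hi j) = 0 := by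
  rw [relBS, map_add, map_mul, map_pow, aeval_X, aeval_deltaAt_brk i hi ε _ j.isLt.le, deltaAt]
  split_ifs <;> ring

def evalAt : AI i hi →ₐ[RR r] RR r :=
  Ideal.Quotient.liftₐ _ (aeval (deltaAt i hi ε)) fun _ hp => by
    refine (Ideal.span_le (I := RingHom.ker (aeval (deltaAt i hi ε)))).mpr ?_ hp
    rintro _ ⟨j, rfl⟩
    exact aeval_deltaAt_relBS i hi ε j

lemma evalAt_mk (p : BB r k) : evalAt i hi ε (Ideal.Quotient.mk _ p) = aeval (deltaAt i hi ε) p :=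
  rfl

lemma deltaAt_ne_zero {j : Fin k} (hj : j ∈ ε) : deltaAt i hi ε j ≠ 0 := by
  rw [deltaAt, if_pos hj, neg_ne_zero]
  refine Weight.toR_ne_zero (a := (fixedPerm i hi ε j).symm ⟨i j, Nat.lt_of_succ_lt (hi j)⟩) ?_
  simp [simpleRootW]

def delta (j : Fin k) : AI i hi := Ideal.Quotient.mk _ (X j)

def monomial (S : Finset (Fin k)) : AI i hi := ∏ j ∈ S, delta i hi j

lemma monomial_eq_mk (S : Finset (Fin k)) :
    monomial i hi S = Ideal.Quotient.mk _ (∏ j ∈ S, X j) :=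
  (map_prod _ _ _).symm

lemma evalAt_monomial (S : Finset (Fin k)) :
    evalAt i hi ε (monomial i hi S) = ∏ j ∈ S, deltaAt i hi ε j := by
  simp [monomial_eq_mk, evalAt_mk]

lemma subset_of_evalAt_monomial_ne_zero {S : Finset (Fin k)}
    (h : evalAt i hi ε (monomial i hi S) ≠ 0) : S ⊆ ε := by
  intro j hj
  by_contra hjε
  exact h (by rw [evalAt_monomial, Finset.prod_eq_zero hj (by simp [deltaAt, hjε])])

lemma evalAt_monomial_self_ne_zero : evalAt i hi ε (monomial i hi ε) ≠ 0 := by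
  rw [evalAt_monomial, Finset.prod_ne_zero_iff]
  exact fun j hj => deltaAt_ne_zero i hi ε hj

lemma linearIndependent_monomial : LinearIndependent (RR r) (monomial i hi) :=
  linearIndependent_of_triangular _ (fun ε => (evalAt i hi ε).toLinearMap)
    (fun ε _ => subset_of_evalAt_monomial_ne_zero i hi ε) (evalAt_monomial_self_ne_zero i hi)

lemma mk_brk (w : Weight r) (j : ℕ) :
    Ideal.Quotient.mk (Ideal.span (Set.range (relBS i hi))) (brk i hi w j)
      = algebraMap (RR r) (AI i hi) w.toR
        + ∑ t ∈ Finset.univ.filter (fun t : Fin k => (t : ℕ) < j),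
            w.pair (i t) (hi t) • delta i hi t := by
  simp only [brk, map_add, map_sum, map_zsmul]
  rfl

lemma delta_mul_self (j : Fin k) :
    delta i hi j * delta i hi j
      = -(Ideal.Quotient.mk _ (brk i hi (simpleRootW r (i j)) j) * delta i hi j) := by
  refine eq_neg_of_add_eq_zero_left ?_
  rw [delta, ← map_mul, ← map_mul, ← map_add, ← sq, ← relBS, Ideal.Quotient.eq_zero_iff_mem]
  exact Ideal.subset_span ⟨j, rfl⟩

lemma delta_mul_monomial_mem_span (j : Fin k) (S : Finset (Fin k)) :
    delta i hi j * monomial i hi S ∈ Submodule.span (RR r) (Set.range (monomial i hi)) := by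
  induction j using WellFoundedLT.induction generalizing S with
  | ind j ih =>
    by_cases hjS : j ∈ S
    · have hS : monomial i hi S = delta i hi j * monomial i hi (S.erase j) :=
        (Finset.mul_prod_erase S _ hjS).symm
      have hreduce : delta i hi j * monomial i hi S
          = -(Ideal.Quotient.mk _ (brk i hi (simpleRootW r (i j)) j) * monomial i hi S) := by
        rw [hS, ← mul_assoc, delta_mul_self]
        ring
      rw [hreduce, mk_brk, add_mul, Finset.sum_mul, ← Algebra.smul_def]
      refine neg_mem (add_mem (Submodule.smul_mem _ _ (Submodule.subset_span ⟨S, rfl⟩))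
        (Submodule.sum_mem _ fun t ht => ?_))
      rw [smul_mul_assoc]
      exact Submodule.smul_of_tower_mem _ _ (ih t (Fin.lt_def.mpr (Finset.mem_filter.mp ht).2) S)
    · rw [monomial, ← Finset.prod_insert hjS]
      exact Submodule.subset_span ⟨insert j S, rfl⟩

lemma span_monomial_eq_top : Submodule.span (RR r) (Set.range (monomial i hi)) = ⊤ := by
  set P := Submodule.span (RR r) (Set.range (monomial i hi))
  have h_mul_delta (j : Fin k) : P ≤ P.comap (LinearMap.mulLeft (RR r) (delta i hi j)) :=
    Submodule.span_le.mpr fun _ ⟨S, hS⟩ => hS ▸ delta_mul_monomial_mem_span i hi j S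
  rw [eq_top_iff]
  rintro x -
  obtain ⟨p, rfl⟩ := Ideal.Quotient.mk_surjective x
  induction p using MvPolynomial.induction_on with
  | C a =>
    rw [← MvPolynomial.algebraMap_eq, Ideal.Quotient.mk_algebraMap, Algebra.algebraMap_eq_smul_one]
    exact Submodule.smul_mem _ _ (Submodule.subset_span ⟨∅, Finset.prod_empty⟩)
  | add p q hp hq =>
    rw [map_add]
    exact add_mem hp hq
  | mul_X p j hp =>
    have h : delta i hi j * Ideal.Quotient.mk _ p ∈ P := h_mul_delta j hp
    rwa [mul_comm (delta i hi j)] at h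

end BottSamelson

/-- `A_I` is a free `R`-module with basis the `2^k` square-free monomials
in the `δ_j` (indexed by subsets of `{1,…,k}`). -/
theorem bottSamelson_free_basis (r k : ℕ) (i : Fin k → ℕ) (hi : ∀ j, i j + 1 < r) :
    ∃ b : Module.Basis (Finset (Fin k)) (RR r) (AI i hi),
      ∀ S : Finset (Fin k),
        b S = Ideal.Quotient.mk _ (∏ j ∈ S, MvPolynomial.X j) := by
  open BottSamelson in
  let b := Module.Basis.mk (linearIndependent_monomial i hi) (span_monomial_eq_top i hi).ge
  exact ⟨b, fun S => (Module.Basis.mk_apply _ _ S).trans (monomial_eq_mk i hi S)⟩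
end
end

section
/- With $\wp(x) = x^n$ (the specialization $b_n = 1$, $b_i = 0$ for $i \ne n$), the divided difference $\wp(x,y) = (x^n - y^n)/(x-y)$ equals the symmetric sum $S(x,y) = x^{n-1} + x^{n-2}y + \dots + y^{n-1}$, and consequently the ring $\mathbb{Z}[[x,y]]/(x^n, y^n, S(x,y))$ is a free $\mathbb{Z}$-module of rank $n(n-1)$. -/
/-!
Since `(x - y) S = x^n - y^n`, the relation `x^n` is redundant, and the quotient is
`(ℤ[y]/(y^n))[x] / (S)`. The same identity shows that `S`, read as a polynomial in `x`,
is monic of degree `n - 1`; so the quotient is free of rank `n - 1` over `ℤ[y]/(y^n)`,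
which is itself free of rank `n` over `ℤ`.
-/

noncomputable section

open MvPolynomial

/-- The symmetric sum `S(x,y) = x^{n-1} + x^{n-2} y + ⋯ + y^{n-1}` in `ℤ[x,y]`. -/
def symmSum (n : ℕ) : MvPolynomial (Fin 2) ℤ :=
  ∑ a ∈ Finset.range n, X 0 ^ a * X 1 ^ (n - 1 - a)

theorem Ideal.span_pow_pow_eq_of_sub_mul {R : Type*} [CommRing R] {x y s : R} {n : ℕ}
    (h : (x - y) * s = x ^ n - y ^ n) :
    Ideal.span {x ^ n, y ^ n, s} = Ideal.span {y ^ n, s} :=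
  Submodule.span_insert_eq_span <| Ideal.mem_span_pair.2 ⟨1, x - y, by linear_combination h⟩

namespace Polynomial

variable {A : Type*} [CommRing A]

def quotientMapCSupSpanEquiv (I : Ideal A) (f : A[X]) :
    A[X] ⧸ (I.map C ⊔ Ideal.span {f}) ≃+* AdjoinRoot (f.map (Ideal.Quotient.mk I)) :=
  (DoubleQuot.quotQuotEquivQuotSup _ _).symm.trans <|
    (Ideal.quotEquivOfEq (by rw [Ideal.map_span, Set.image_singleton])).trans
      (AdjoinRoot.Polynomial.quotQuotEquivComm I f).symm

theorem X_sub_C_mul_geom_sum₂ (t : A) (n : ℕ) :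
    (X - C t) * ∑ i ∈ Finset.range n, X ^ i * C t ^ (n - 1 - i) = X ^ n - C (t ^ n) := by
  rw [mul_comm, geom_sum₂_mul, C_pow]

theorem monic_geom_sum₂_X_C (t : A) {n : ℕ} (hn : n ≠ 0) :
    (∑ i ∈ Finset.range n, X ^ i * C t ^ (n - 1 - i)).Monic :=
  (monic_X_sub_C t).of_mul_monic_left <|
    X_sub_C_mul_geom_sum₂ t n ▸ monic_X_pow_sub_C _ hn

theorem natDegree_geom_sum₂_X_C [Nontrivial A] (t : A) {n : ℕ} (hn : n ≠ 0) :
    (∑ i ∈ Finset.range n, X ^ i * C t ^ (n - 1 - i)).natDegree = n - 1 := by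
  have h := (monic_X_sub_C t).natDegree_mul (monic_geom_sum₂_X_C t hn)
  rw [X_sub_C_mul_geom_sum₂, natDegree_X_pow_sub_C, natDegree_X_sub_C] at h
  omega

end Polynomial

namespace AdjoinRoot

variable {R B : Type*} [CommRing R] [CommRing B] [Algebra R B] [Module.Free R B]
  {g : Polynomial B}

theorem free_of_monic (hg : g.Monic) : Module.Free R (AdjoinRoot g) :=
  have := Module.Free.of_basis (powerBasis' hg).basis
  Module.Free.trans (S := B)

theorem finrank_of_monic [StrongRankCondition R] [StrongRankCondition B] (hg : g.Monic) :
    Module.finrank R (AdjoinRoot g) = Module.finrank R B * g.natDegree := by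
  have := Module.Free.of_basis (powerBasis' hg).basis
  rw [← Module.finrank_mul_finrank R B, (powerBasis' hg).finrank, powerBasis'_dim]

end AdjoinRoot

namespace MvPolynomial

variable (R : Type*) [CommRing R]

def finTwoAlgEquiv : MvPolynomial (Fin 2) R ≃ₐ[R] Polynomial (Polynomial R) :=
  (finSuccEquiv R 1).trans (Polynomial.mapAlgEquiv (uniqueAlgEquiv R (Fin 1)))

@[simp]
theorem finTwoAlgEquiv_X_zero : finTwoAlgEquiv R (X 0) = Polynomial.X := by
  simp [finTwoAlgEquiv, finSuccEquiv_X_zero]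

@[simp]
theorem finTwoAlgEquiv_X_one : finTwoAlgEquiv R (X 1) = Polynomial.C Polynomial.X := by
  rw [finTwoAlgEquiv, AlgEquiv.trans_apply, ← Fin.succ_zero_eq_one, finSuccEquiv_X_succ]
  simp

end MvPolynomial

theorem finTwoAlgEquiv_symmSum (n : ℕ) :
    finTwoAlgEquiv ℤ (symmSum n) =
      ∑ i ∈ Finset.range n, Polynomial.X ^ i * Polynomial.C Polynomial.X ^ (n - 1 - i) := by
  simp [symmSum]

theorem sub_mul_symmSum (n : ℕ) :
    (X 0 - X 1) * symmSum n = X 0 ^ n - (X 1 : MvPolynomial (Fin 2) ℤ) ^ n := by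
  rw [mul_comm]
  exact geom_sum₂_mul _ _ n

theorem map_span_symmSum (n : ℕ) :
    (Ideal.span {X 0 ^ n, X 1 ^ n, symmSum n}).map (finTwoAlgEquiv ℤ) =
      (Ideal.span {Polynomial.X ^ n}).map Polynomial.C ⊔
        Ideal.span {finTwoAlgEquiv ℤ (symmSum n)} := by
  rw [Ideal.span_pow_pow_eq_of_sub_mul (sub_mul_symmSum n), Ideal.span_insert, Ideal.map_sup,
    Ideal.map_span, Ideal.map_span, Ideal.map_span]
  simp

def quotientSpanSymmSumEquiv (n : ℕ) :
    (MvPolynomial (Fin 2) ℤ ⧸ Ideal.span {X 0 ^ n, X 1 ^ n, symmSum n}) ≃+*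
      AdjoinRoot ((finTwoAlgEquiv ℤ (symmSum n)).map (AdjoinRoot.mk (Polynomial.X ^ n))) :=
  (Ideal.quotientEquiv _ _ (finTwoAlgEquiv ℤ).toRingEquiv (map_span_symmSum n).symm).trans
    (Polynomial.quotientMapCSupSpanEquiv _ _)

/-- with `℘(x) = x^n`, the divided difference `(x^n - y^n)/(x-y)` equals
`S(x,y)`, and `ℤ[x,y]/(x^n, y^n, S(x,y))` is a free `ℤ`-module of rank `n(n-1)`. -/
theorem hopf_link_E2 (n : ℕ) (hn : 1 ≤ n) :
    (X 0 - X 1) * symmSum n = X 0 ^ n - (X 1 : MvPolynomial (Fin 2) ℤ) ^ n ∧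
    Module.Free ℤ
      (MvPolynomial (Fin 2) ℤ ⧸
        Ideal.span {X 0 ^ n, X 1 ^ n, symmSum n}) ∧
    Module.finrank ℤ
      (MvPolynomial (Fin 2) ℤ ⧸
        Ideal.span {X 0 ^ n, X 1 ^ n, symmSum n}) = n * (n - 1) := by
  have hn₀ : n ≠ 0 := Nat.one_le_iff_ne_zero.mp hn
  have hX : (Polynomial.X ^ n : Polynomial ℤ).Monic := Polynomial.monic_X_pow n
  have : Module.Free ℤ (AdjoinRoot (Polynomial.X ^ n : Polynomial ℤ)) :=
    AdjoinRoot.free_of_monic hX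
  have : Nontrivial (AdjoinRoot (Polynomial.X ^ n : Polynomial ℤ)) :=
    AdjoinRoot.nontrivial _ (by simpa using hn₀)
  have hS : (finTwoAlgEquiv ℤ (symmSum n)).Monic :=
    finTwoAlgEquiv_symmSum n ▸ Polynomial.monic_geom_sum₂_X_C _ hn₀
  have hg := hS.map (AdjoinRoot.mk (Polynomial.X ^ n))
  have := AdjoinRoot.free_of_monic (R := ℤ) hg
  let e := (quotientSpanSymmSumEquiv n).toIntAlgEquiv.toLinearEquiv
  refine ⟨sub_mul_symmSum n, Module.Free.of_equiv e.symm, ?_⟩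
  rw [e.finrank_eq, AdjoinRoot.finrank_of_monic hg, AdjoinRoot.finrank_of_monic hX,
    hS.natDegree_map, finTwoAlgEquiv_symmSum, Polynomial.natDegree_geom_sum₂_X_C _ hn₀,
    Module.finrank_self, Polynomial.natDegree_X_pow, one_mul]
end
end
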